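/- arXiv:1909.06225 — 3 statements merged into one kernel-verified Lean document; each statement's English description precedes it below -/
import Mathlib

section
/- Let T>0, H>0 and d≥1 an integer with Hd<1. Then lim_{ε↓0} (2π)^{−d/2} ∫₀^T ∫₀^t ( (min(t−s, T−(t−s)))^{2H} + ε )^{−d/2} ds dt = (2π)^{−d/2} · T · (T/2)^{1−dH} / (1−dH); in particular this limit, which equals the expected self-intersection local time E(L) of the d-dimensional fractional Brownian loop, is finite. -/
open MeasureTheory Real Set Filter Topology

namespace Stmt9Aux

/-- The regularized kernel, truncated so the base is nonnegative everywhere. -/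
noncomputable def kf (T H : ℝ) (d : ℕ) (ε u : ℝ) : ℝ :=
  (max (min u (T - u)) 0 ^ (2 * H) + ε) ^ (-(d : ℝ) / 2)

/-- The limiting (singular) kernel. -/
noncomputable def ff (T α : ℝ) (u : ℝ) : ℝ := min u (T - u) ^ (-α)

variable {T H α : ℝ} {d : ℕ}

lemma pow_collapse (hH : 0 < H) (hα : α = d * H) {m : ℝ} (hm : 0 < m) :
    (m ^ (2 * H)) ^ (-(d : ℝ) / 2) = m ^ (-α) := by
  rw [← Real.rpow_mul hm.le]
  congr 1
  rw [hα]; ring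

lemma kf_cont (hH : 0 < H) {ε : ℝ} (hε : 0 < ε) : Continuous (kf T H d ε) := by
  have h1 : Continuous fun u : ℝ => max (min u (T - u)) 0 ^ (2 * H) :=
    ((continuous_id.min (continuous_const.sub continuous_id)).max continuous_const).rpow_const
      (fun x => Or.inr (by positivity))
  exact (h1.add continuous_const).rpow_const fun x => Or.inl (by
    have : (0:ℝ) ≤ max (min x (T - x)) 0 ^ (2 * H) := Real.rpow_nonneg (le_max_right _ _) _
    exact ne_of_gt (by simp only [Pi.add_apply]; linarith))

lemma min_pos {u : ℝ} (hu : u ∈ Ioo 0 T) : 0 < min u (T - u) :=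
  lt_min hu.1 (by linarith [hu.2])

lemma kf_nonneg {ε u : ℝ} (hε : 0 < ε) : 0 ≤ kf T H d ε u := by
  have : (0:ℝ) ≤ max (min u (T - u)) 0 ^ (2 * H) := Real.rpow_nonneg (le_max_right _ _) _
  exact Real.rpow_nonneg (by linarith) _

lemma kf_le_ff (hH : 0 < H) (hα : α = d * H) {ε u : ℝ} (hε : 0 < ε) (hu : u ∈ Ioo 0 T) :
    kf T H d ε u ≤ ff T α u := by
  have hm : 0 < min u (T - u) := min_pos hu
  have hmax : max (min u (T - u)) 0 = min u (T - u) := max_eq_left hm.le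
  have hb : 0 < min u (T - u) ^ (2 * H) := Real.rpow_pos_of_pos hm _
  have h1 : kf T H d ε u ≤ (min u (T - u) ^ (2 * H)) ^ (-(d : ℝ) / 2) := by
    rw [kf, hmax]
    exact Real.rpow_le_rpow_of_nonpos hb (by linarith) (by
      have : (0:ℝ) ≤ (d : ℝ) := Nat.cast_nonneg d
      linarith)
  calc kf T H d ε u ≤ (min u (T - u) ^ (2 * H)) ^ (-(d : ℝ) / 2) := h1
    _ = ff T α u := pow_collapse hH hα hm

lemma ff_eqOn_left : EqOn (ff T α) (fun u : ℝ => u ^ (-α)) (Icc 0 (T / 2)) := by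
  intro u hu
  rw [ff, min_eq_left (by linarith [hu.1, hu.2])]

lemma ff_eqOn_right : EqOn (ff T α) (fun u : ℝ => (T - u) ^ (-α)) (Icc (T / 2) T) := by
  intro u hu
  rw [ff, min_eq_right (by linarith [hu.1, hu.2])]

lemma ff_integrableOn (hT : 0 < T) (hα1 : α < 1) : IntegrableOn (ff T α) (Ioc 0 T) := by
  have hr : (-1 : ℝ) < -α := by linarith
  have i1 : IntegrableOn (ff T α) (Ioc 0 (T / 2)) := by
    have := (intervalIntegral.intervalIntegrable_rpow' (a := 0) (b := T / 2) hr)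
    rw [intervalIntegrable_iff_integrableOn_Ioc_of_le (by linarith)] at this
    exact this.congr_fun (fun u hu => (ff_eqOn_left (Ioc_subset_Icc_self hu)).symm)
      measurableSet_Ioc
  have i2 : IntegrableOn (ff T α) (Ioc (T / 2) T) := by
    have h0 : IntervalIntegrable (fun x : ℝ => x ^ (-α)) volume (T / 2) 0 :=
      intervalIntegral.intervalIntegrable_rpow' hr
    have := h0.comp_sub_left T
    have hTT : T - T / 2 = T / 2 := by ring
    rw [hTT, sub_zero, intervalIntegrable_iff_integrableOn_Ioc_of_le (by linarith)] at this
    exact this.congr_fun (fun u hu => (ff_eqOn_right (Ioc_subset_Icc_self hu)).symm)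
      measurableSet_Ioc
  have : Ioc (0:ℝ) (T / 2) ∪ Ioc (T / 2) T = Ioc 0 T :=
    Ioc_union_Ioc_eq_Ioc (by linarith) (by linarith)
  rw [← this]
  exact i1.union i2

lemma kf_tendsto (hH : 0 < H) (hα : α = d * H) {u : ℝ} (hu : u ∈ Ioo 0 T) :
    Tendsto (fun ε => kf T H d ε u) (𝓝[>] 0) (𝓝 (ff T α u)) := by
  have hm : 0 < min u (T - u) := min_pos hu
  have hmax : max (min u (T - u)) 0 = min u (T - u) := max_eq_left hm.le
  set c : ℝ := min u (T - u) ^ (2 * H) with hc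
  have hcpos : 0 < c := Real.rpow_pos_of_pos hm _
  have h1 : Tendsto (fun ε : ℝ => c + ε) (𝓝[>] 0) (𝓝 c) := by
    have h0 : Tendsto (fun ε : ℝ => c + ε) (𝓝 0) (𝓝 (c + 0)) :=
      tendsto_const_nhds.add tendsto_id
    rw [add_zero] at h0
    exact h0.mono_left nhdsWithin_le_nhds
  have h2 : Tendsto (fun x : ℝ => x ^ (-(d : ℝ) / 2)) (𝓝 c) (𝓝 (c ^ (-(d : ℝ) / 2))) :=
    (Real.continuousAt_rpow_const c _ (Or.inl hcpos.ne')).tendsto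
  have h3 := h2.comp h1
  have : c ^ (-(d : ℝ) / 2) = ff T α u := pow_collapse hH hα hm
  rw [this] at h3
  refine h3.congr fun ε => ?_
  simp only [kf, hmax, Function.comp, hc]

lemma inner_reflect (hT : 0 < T) {t : ℝ} (ht : t ∈ Ioo 0 T) (ε : ℝ) :
    ∫ s in Ioo 0 t, (min (t - s) (T - (t - s)) ^ (2 * H) + ε) ^ (-(d : ℝ) / 2)
      = ∫ u in Ioo 0 t, kf T H d ε u := by
  have h1 : ∫ s in Ioo 0 t, (min (t - s) (T - (t - s)) ^ (2 * H) + ε) ^ (-(d : ℝ) / 2)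
      = ∫ s in Ioo 0 t, kf T H d ε (t - s) := by
    refine setIntegral_congr_fun measurableSet_Ioo fun s hs => ?_
    have h : t - s ∈ Ioo 0 T := ⟨by linarith [hs.2], by linarith [hs.1, ht.2]⟩
    rw [kf, max_eq_left (min_pos h).le]
  rw [h1, ← integral_Ioc_eq_integral_Ioo, ← integral_Ioc_eq_integral_Ioo,
    ← intervalIntegral.integral_of_le ht.1.le, ← intervalIntegral.integral_of_le ht.1.le]
  simpa using intervalIntegral.integral_comp_sub_left (kf T H d ε) t

lemma inner_tendsto (hT : 0 < T) (hH : 0 < H) (hα : α = d * H) (hα1 : α < 1)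
    {t : ℝ} (ht : t ∈ Ioo 0 T) :
    Tendsto (fun ε => ∫ u in Ioo 0 t, kf T H d ε u) (𝓝[>] 0)
      (𝓝 (∫ u in Ioo 0 t, ff T α u)) := by
  have hsub : Ioo (0:ℝ) t ⊆ Ioo 0 T := Ioo_subset_Ioo le_rfl ht.2.le
  apply tendsto_integral_filter_of_dominated_convergence (bound := ff T α)
  · filter_upwards [self_mem_nhdsWithin] with ε hε
    exact ((kf_cont hH hε).aestronglyMeasurable).restrict
  · filter_upwards [self_mem_nhdsWithin] with ε hε
    rw [ae_restrict_iff' measurableSet_Ioo]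
    refine ae_of_all _ fun u hu => ?_
    rw [Real.norm_of_nonneg (kf_nonneg hε)]
    exact kf_le_ff hH hα hε (hsub hu)
  · exact (ff_integrableOn hT hα1).mono_set
      (Subset.trans hsub Ioo_subset_Ioc_self)
  · rw [ae_restrict_iff' measurableSet_Ioo]
    exact ae_of_all _ fun u hu => kf_tendsto hH hα (hsub hu)

end Stmt9Aux

open Stmt9Aux

/-- For `Hd < 1`, the regularized expected self-intersection local time of a
`d`-dimensional fractional Brownian loop converges as `ε ↓ 0`:
`lim_{ε↓0} (2π)^{−d/2} ∫₀^T ∫₀^t ((min(t−s, T−(t−s)))^{2H} + ε)^{−d/2} ds dt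
  = (2π)^{−d/2} T (T/2)^{1−dH}/(1−dH)`, a finite value. -/
theorem stmt9 (T H : ℝ) (d : ℕ) (hT : 0 < T) (hH : 0 < H) (hd : 1 ≤ d)
    (hHd : H * d < 1) :
    Tendsto (fun ε : ℝ => (2 * π) ^ (-(d : ℝ) / 2) *
        ∫ t in Ioo 0 T, ∫ s in Ioo 0 t,
          (min (t - s) (T - (t - s)) ^ (2 * H) + ε) ^ (-(d : ℝ) / 2))
      (𝓝[>] 0)
      (𝓝 ((2 * π) ^ (-(d : ℝ) / 2) * T * (T / 2) ^ (1 - d * H) / (1 - d * H))) := by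
  have hd1 : (1:ℝ) ≤ (d : ℝ) := by exact_mod_cast hd
  set α : ℝ := (d : ℝ) * H with hα
  have hα0 : 0 < α := mul_pos (by linarith) hH
  have hα1 : α < 1 := by rw [hα, mul_comm]; exact hHd
  set β : ℝ := 1 - α with hβ
  have hβ0 : 0 < β := by simp [hβ]; linarith
  have hβ1 : -1 < -α := by linarith
  have hT2 : 0 < T / 2 := by linarith
  -- the limit function Φ
  set Φ : ℝ → ℝ := fun t => ∫ u in Ioo 0 t, ff T α u with hΦ
  -- Φ on [0, T/2]
  have hΦ_int : ∀ t, 0 ≤ t → Φ t = ∫ u in (0:ℝ)..t, ff T α u := by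
    intro t ht
    rw [hΦ, intervalIntegral.integral_of_le ht, integral_Ioc_eq_integral_Ioo]
  have hΦ1 : ∀ t ∈ Icc (0:ℝ) (T / 2), Φ t = t ^ β / β := by
    intro t ht
    rw [hΦ_int t ht.1]
    rw [intervalIntegral.integral_congr (g := fun u : ℝ => u ^ (-α)) ?_]
    · rw [integral_rpow (Or.inl hβ1)]
      have h0 : (0:ℝ) ^ (-α + 1) = 0 := Real.zero_rpow (by linarith)
      rw [h0]
      have : -α + 1 = β := by rw [hβ]; ring
      rw [this, sub_zero]
    · intro u hu
      rw [uIcc_of_le ht.1] at hu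
      exact ff_eqOn_left ⟨hu.1, le_trans hu.2 ht.2⟩
  -- Φ on [T/2, T]
  have hffi1 : IntervalIntegrable (ff T α) volume 0 (T / 2) := by
    rw [intervalIntegrable_iff_integrableOn_Ioc_of_le hT2.le]
    exact (ff_integrableOn hT hα1).mono_set (Ioc_subset_Ioc le_rfl (by linarith))
  have hΦ2 : ∀ t ∈ Icc (T / 2) T, Φ t = (2 * (T / 2) ^ β - (T - t) ^ β) / β := by
    intro t ht
    have ht0 : 0 ≤ t := by linarith [ht.1]
    rw [hΦ_int t ht0]
    have hffi2 : IntervalIntegrable (ff T α) volume (T / 2) t := by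
      rw [intervalIntegrable_iff_integrableOn_Ioc_of_le ht.1]
      exact (ff_integrableOn hT hα1).mono_set (Ioc_subset_Ioc (by linarith) ht.2)
    rw [← intervalIntegral.integral_add_adjacent_intervals hffi1 hffi2]
    have e1 : ∫ u in (0:ℝ)..(T/2), ff T α u = (T / 2) ^ β / β := by
      rw [← hΦ_int _ hT2.le]
      exact hΦ1 _ ⟨hT2.le, le_refl _⟩
    have e2 : ∫ u in (T/2)..t, ff T α u = ((T / 2) ^ β - (T - t) ^ β) / β := by
      rw [intervalIntegral.integral_congr (g := fun u : ℝ => (T - u) ^ (-α)) ?_]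
      · have := intervalIntegral.integral_comp_sub_left (fun u : ℝ => u ^ (-α)) T
          (a := T / 2) (b := t)
        rw [this, integral_rpow (Or.inl hβ1)]
        have hTT : T - T / 2 = T / 2 := by ring
        rw [hTT]
        have : -α + 1 = β := by rw [hβ]; ring
        rw [this]
      · intro u hu
        rw [uIcc_of_le ht.1] at hu
        exact ff_eqOn_right ⟨hu.1, le_trans hu.2 ht.2⟩
    rw [e1, e2]; ring
  -- value of the outer integral of Φ
  have hV : ∫ t in Ioo 0 T, Φ t = T * (T / 2) ^ β / β := by
    have hdisj : Disjoint (Ioc (0:ℝ) (T/2)) (Ioc (T/2) T) := Ioc_disjoint_Ioc_of_le le_rfl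
    have hun : Ioc (0:ℝ) (T/2) ∪ Ioc (T/2) T = Ioc 0 T :=
      Ioc_union_Ioc_eq_Ioc (by linarith) (by linarith)
    have hc1 : Continuous fun t : ℝ => t ^ β / β :=
      (Real.continuous_rpow_const hβ0.le).div_const β
    have hc2 : Continuous fun t : ℝ => (2 * (T / 2) ^ β - (T - t) ^ β) / β := by
      refine Continuous.div_const ?_ β
      exact continuous_const.sub ((continuous_const.sub continuous_id).rpow_const
        fun x => Or.inr hβ0.le)
    have hi1 : IntegrableOn Φ (Ioc 0 (T/2)) :=
      (hc1.integrableOn_Ioc).congr_fun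
        (fun t ht => (hΦ1 t (Ioc_subset_Icc_self ht)).symm) measurableSet_Ioc
    have hi2 : IntegrableOn Φ (Ioc (T/2) T) :=
      (hc2.integrableOn_Ioc).congr_fun
        (fun t ht => (hΦ2 t (Ioc_subset_Icc_self ht)).symm) measurableSet_Ioc
    rw [← integral_Ioc_eq_integral_Ioo, ← hun, setIntegral_union hdisj measurableSet_Ioc hi1 hi2]
    have p1 : ∫ t in Ioc (0:ℝ) (T/2), Φ t = (T / 2) ^ (β + 1) / (β + 1) / β := by
      rw [setIntegral_congr_fun measurableSet_Ioc
        (fun t ht => hΦ1 t (Ioc_subset_Icc_self ht))]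
      rw [← intervalIntegral.integral_of_le hT2.le]
      rw [intervalIntegral.integral_div, integral_rpow (Or.inl (by linarith : (-1:ℝ) < β))]
      have h0 : (0:ℝ) ^ (β + 1) = 0 := Real.zero_rpow (by linarith)
      rw [h0, sub_zero]
    have p2 : ∫ t in Ioc (T/2) T, Φ t
        = (2 * (T / 2) ^ β * (T - T / 2) - (T / 2) ^ (β + 1) / (β + 1)) / β := by
      rw [setIntegral_congr_fun measurableSet_Ioc
        (fun t ht => hΦ2 t (Ioc_subset_Icc_self ht))]
      rw [← intervalIntegral.integral_of_le (by linarith : T / 2 ≤ T)]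
      rw [intervalIntegral.integral_div]
      congr 1
      have hsplit : ∫ t in (T/2)..T, (2 * (T / 2) ^ β - (T - t) ^ β)
          = (∫ t in (T/2)..T, (2 * (T / 2) ^ β : ℝ)) - ∫ t in (T/2)..T, (T - t) ^ β := by
        apply intervalIntegral.integral_sub
        · exact intervalIntegrable_const
        · have h0 : IntervalIntegrable (fun x : ℝ => x ^ β) volume (T / 2) 0 :=
            intervalIntegral.intervalIntegrable_rpow' (by linarith)
          have := h0.comp_sub_left T
          have hTT : T - T / 2 = T / 2 := by ring
          rwa [hTT, sub_zero] at this
      rw [hsplit, intervalIntegral.integral_const]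
      have e3 : ∫ t in (T/2)..T, (T - t) ^ β = (T / 2) ^ (β + 1) / (β + 1) := by
        have := intervalIntegral.integral_comp_sub_left (fun u : ℝ => u ^ β) T
          (a := T / 2) (b := T)
        rw [this, integral_rpow (Or.inl (by linarith : (-1:ℝ) < β))]
        have hTT : T - T / 2 = T / 2 := by ring
        rw [hTT, sub_self]
        have h0 : (0:ℝ) ^ (β + 1) = 0 := Real.zero_rpow (by linarith)
        rw [h0, sub_zero]
      rw [e3, smul_eq_mul]
      ring
    rw [p1, p2]
    have hrw : (T / 2) ^ (β + 1) = (T / 2) ^ β * (T / 2) := by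
      rw [Real.rpow_add hT2, Real.rpow_one]
    rw [hrw]
    have hβ1' : (0:ℝ) < β + 1 := by linarith
    field_simp
    ring
  -- outer dominated convergence
  set C0 : ℝ := ∫ u in Ioo 0 T, ff T α u with hC0
  have houter : Tendsto (fun ε : ℝ => ∫ t in Ioo 0 T, ∫ u in Ioo 0 t, kf T H d ε u)
      (𝓝[>] 0) (𝓝 (∫ t in Ioo 0 T, Φ t)) := by
    apply tendsto_integral_filter_of_dominated_convergence (bound := fun _ => C0)
    · filter_upwards [self_mem_nhdsWithin] with ε hε
      have hcont : Continuous fun t : ℝ => ∫ u in (0:ℝ)..t, kf T H d ε u :=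
        intervalIntegral.continuous_primitive
          (fun a b => ((kf_cont hH hε).intervalIntegrable a b)) 0
      apply (hcont.aestronglyMeasurable.restrict).congr
      rw [Filter.EventuallyEq, ae_restrict_iff' measurableSet_Ioo]
      refine ae_of_all _ fun t ht => ?_
      rw [intervalIntegral.integral_of_le ht.1.le, integral_Ioc_eq_integral_Ioo]
    · filter_upwards [self_mem_nhdsWithin] with ε hε
      rw [ae_restrict_iff' measurableSet_Ioo]
      refine ae_of_all _ fun t ht => ?_
      have hsub : Ioo (0:ℝ) t ⊆ Ioo 0 T := Ioo_subset_Ioo le_rfl ht.2.le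
      have hknn : 0 ≤ ∫ u in Ioo 0 t, kf T H d ε u :=
        setIntegral_nonneg measurableSet_Ioo fun u _ => kf_nonneg hε
      rw [Real.norm_of_nonneg hknn]
      have hk_int : IntegrableOn (kf T H d ε) (Ioo 0 t) :=
        ((kf_cont hH hε).integrableOn_Icc).mono_set Ioo_subset_Icc_self
      have hf_int : IntegrableOn (ff T α) (Ioo 0 t) :=
        (ff_integrableOn hT hα1).mono_set (Subset.trans hsub Ioo_subset_Ioc_self)
      have step1 : ∫ u in Ioo 0 t, kf T H d ε u ≤ ∫ u in Ioo 0 t, ff T α u :=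
        setIntegral_mono_on hk_int hf_int measurableSet_Ioo
          fun u hu => kf_le_ff hH hα hε (hsub hu)
      have step2 : ∫ u in Ioo 0 t, ff T α u ≤ C0 := by
        rw [hC0]
        apply setIntegral_mono_set
          ((ff_integrableOn hT hα1).mono_set Ioo_subset_Ioc_self)
        · rw [Filter.EventuallyLE, ae_restrict_iff' measurableSet_Ioo]
          exact ae_of_all _ fun u hu => (Real.rpow_pos_of_pos (min_pos hu) _).le
        · exact ae_of_all _ hsub
      linarith
    · exact integrableOn_const measure_Ioo_lt_top.ne
    · rw [ae_restrict_iff' measurableSet_Ioo]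
      exact ae_of_all _ fun t ht => inner_tendsto hT hH hα hα1 ht
  -- assemble
  have hcongr : ∀ ε : ℝ,
      (∫ t in Ioo 0 T, ∫ s in Ioo 0 t,
        (min (t - s) (T - (t - s)) ^ (2 * H) + ε) ^ (-(d : ℝ) / 2))
      = ∫ t in Ioo 0 T, ∫ u in Ioo 0 t, kf T H d ε u := by
    intro ε
    exact setIntegral_congr_fun measurableSet_Ioo fun t ht => inner_reflect hT ht ε
  simp only [hcongr]
  have hval : (2 * π) ^ (-(d : ℝ) / 2) * T * (T / 2) ^ β / β
      = (2 * π) ^ (-(d : ℝ) / 2) * (T * (T / 2) ^ β / β) := by ring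
  rw [hval, ← hV]
  exact houter.const_mul _
end

section
/- Let T>0, d≥2 an integer and H = 1/d (so Hd = 1). Then there is a constant C>0 such that for all ε ∈ (0,1): ∫₀^T ∫₀^t ( (min(t−s, T−(t−s)))^{2H} + ε )^{−d/2} ds dt ≤ C (1 + |log ε|). In other words, the expectation of the regularized self-intersection local time of the fractional Brownian loop satisfies E(L_ε) = O(|log ε|) as ε↓0. -/
open MeasureTheory Real Set

private lemma superadd_rpow {x y p : ℝ} (hx : 0 ≤ x) (hy : 0 ≤ y) (hp : 1 ≤ p) :
    x ^ p + y ^ p ≤ (x + y) ^ p := by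
  lift x to NNReal using hx
  lift y to NNReal using hy
  exact_mod_cast NNReal.add_rpow_le_rpow_add x y hp


set_option maxHeartbeats 1000000 in
/-- For `d ≥ 2` and `H = 1/d` (so `Hd = 1`), the expectation of the
regularized self-intersection local time of the fractional Brownian loop is
`O(|log ε|)`: there is `C > 0` with
`∫₀^T ∫₀^t ((min(t−s, T−(t−s)))^{2H} + ε)^{−d/2} ds dt ≤ C(1 + |log ε|)`
for all `ε ∈ (0,1)`. -/
theorem stmt10 (T : ℝ) (d : ℕ) (H : ℝ) (hT : 0 < T) (hd : 2 ≤ d)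
    (hH : H = 1 / d) :
    ∃ C : ℝ, 0 < C ∧ ∀ ε ∈ Ioo (0 : ℝ) 1,
      (∫ t in Ioo 0 T, ∫ s in Ioo 0 t,
          (min (t - s) (T - (t - s)) ^ (2 * H) + ε) ^ (-(d : ℝ) / 2))
        ≤ C * (1 + |Real.log ε|) := by
  have hd2 : (2:ℝ) ≤ (d:ℝ) := by exact_mod_cast hd
  have hd0 : (0:ℝ) < (d:ℝ) := by linarith
  have hHd : 2 * H * ((d:ℝ)/2) = 1 := by
    rw [hH]; field_simp
  set L : ℝ := Real.log (T + 1) with hLdef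
  have hL0 : 0 ≤ L := Real.log_nonneg (by linarith)
  refine ⟨T * (2 * L + d), by nlinarith, ?_⟩
  rintro ε ⟨hε0, hε1⟩
  set δ : ℝ := ε ^ ((d:ℝ)/2) with hδdef
  have hδ0 : 0 < δ := Real.rpow_pos_of_pos hε0 _
  have hδ1 : δ ≤ 1 := le_of_lt (Real.rpow_lt_one hε0.le hε1 (by linarith))
  have hlogδ : |Real.log δ| = ((d:ℝ)/2) * |Real.log ε| := by
    rw [hδdef, Real.log_rpow hε0, abs_mul, abs_of_pos (by linarith : (0:ℝ) < (d:ℝ)/2)]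
  set B : ℝ := 2 * L + (d:ℝ) * |Real.log ε| with hBdef
  have hB0 : 0 ≤ B := by positivity
  -- inner bound
  have key : ∀ t ∈ Ioo (0:ℝ) T,
      (∫ s in Ioo 0 t, (min (t - s) (T - (t - s)) ^ (2 * H) + ε) ^ (-(d : ℝ) / 2)) ≤ B := by
    rintro t ⟨ht0, htT⟩
    set f : ℝ → ℝ := fun s => (min (t - s) (T - (t - s)) ^ (2 * H) + ε) ^ (-(d : ℝ) / 2)
      with hfdef
    set g : ℝ → ℝ := fun s => (t - s + δ)⁻¹ + (T - (t - s) + δ)⁻¹ with hgdef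
    have hpt : ∀ s ∈ Ioo (0:ℝ) t, f s ≤ g s := by
      rintro s ⟨hs0, hst⟩
      set m : ℝ := min (t - s) (T - (t - s)) with hmdef
      have hm0 : 0 < m := lt_min (by linarith) (by linarith)
      have hbase : 0 < m ^ (2 * H) + ε := by
        have := Real.rpow_nonneg hm0.le (2 * H); linarith
      have hstep1 : f s ≤ (m + δ)⁻¹ := by
        have hsup : m + δ ≤ (m ^ (2 * H) + ε) ^ ((d:ℝ)/2) := by
          have h1 := superadd_rpow (Real.rpow_nonneg hm0.le (2 * H)) hε0.le
            (by linarith : (1:ℝ) ≤ (d:ℝ)/2)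
          have h2 : (m ^ (2 * H)) ^ ((d:ℝ)/2) = m := by
            rw [← Real.rpow_mul hm0.le, hHd, Real.rpow_one]
          calc m + δ = (m ^ (2*H)) ^ ((d:ℝ)/2) + ε ^ ((d:ℝ)/2) := by rw [h2]
            _ ≤ (m ^ (2 * H) + ε) ^ ((d:ℝ)/2) := h1
        have : f s = ((m ^ (2 * H) + ε) ^ ((d:ℝ)/2))⁻¹ := by
          rw [hfdef]
          simp only [← hmdef]
          rw [show -(d:ℝ)/2 = -((d:ℝ)/2) by ring, Real.rpow_neg hbase.le]
        rw [this]
        exact inv_anti₀ (by linarith) hsup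
      have hstep2 : (m + δ)⁻¹ ≤ g s := by
        rw [hgdef]
        rcases min_choice (t - s) (T - (t - s)) with h | h
        · rw [hmdef, h]
          have : 0 ≤ (T - (t - s) + δ)⁻¹ := le_of_lt (inv_pos.mpr (by linarith))
          linarith
        · rw [hmdef, h]
          have : 0 ≤ (t - s + δ)⁻¹ := le_of_lt (inv_pos.mpr (by linarith))
          linarith
      exact hstep1.trans hstep2
    -- integrability
    have hfm : Measurable f := by rw [hfdef]; fun_prop
    have hfint : IntegrableOn f (Ioo 0 t) := by
      refine Integrable.mono' (g := fun _ => ε ^ (-(d:ℝ)/2))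
        (integrableOn_const measure_Ioo_lt_top.ne)
        hfm.aestronglyMeasurable.restrict ?_
      · filter_upwards [ae_restrict_mem measurableSet_Ioo] with s hs
        rcases hs with ⟨hs0, hst⟩
        have hm0 : 0 < min (t - s) (T - (t - s)) := lt_min (by linarith) (by linarith)
        have hbase : 0 < min (t - s) (T - (t - s)) ^ (2 * H) + ε := by
          have := Real.rpow_nonneg hm0.le (2 * H); linarith
        have h1 : f s ≤ ε ^ (-(d:ℝ)/2) := by
          apply Real.rpow_le_rpow_of_nonpos hε0 (by
            have := Real.rpow_nonneg hm0.le (2 * H); linarith) (by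
            rw [neg_div]; exact neg_nonpos.mpr (by positivity))
        rw [Real.norm_eq_abs, abs_of_nonneg (Real.rpow_nonneg hbase.le _)]
        exact h1
    have hg1int : IntegrableOn (fun s => (t - s + δ)⁻¹) (Ioo 0 t) := by
      apply (ContinuousOn.integrableOn_Icc ?_).mono_set Ioo_subset_Icc_self
      apply ContinuousOn.inv₀ (by fun_prop)
      rintro s ⟨hs0, hst⟩
      intro hc; nlinarith [hδ0]
    have hg2int : IntegrableOn (fun s => (T - (t - s) + δ)⁻¹) (Ioo 0 t) := by
      apply (ContinuousOn.integrableOn_Icc ?_).mono_set Ioo_subset_Icc_self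
      apply ContinuousOn.inv₀ (by fun_prop)
      rintro s ⟨hs0, hst⟩
      intro hc; nlinarith [hδ0]
    have hgint : IntegrableOn g (Ioo 0 t) := hg1int.add hg2int
    have hmono : (∫ s in Ioo 0 t, f s) ≤ ∫ s in Ioo 0 t, g s :=
      setIntegral_mono_on hfint hgint measurableSet_Ioo hpt
    -- compute the g integral
    have hsplit : (∫ s in Ioo 0 t, g s)
        = (∫ s in Ioo 0 t, (t - s + δ)⁻¹) + ∫ s in Ioo 0 t, (T - (t - s) + δ)⁻¹ :=
      integral_add hg1int hg2int
    have hIoo1 : (∫ s in Ioo 0 t, (t - s + δ)⁻¹) = ∫ s in (0:ℝ)..t, (t - s + δ)⁻¹ := by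
      rw [intervalIntegral.integral_of_le ht0.le, integral_Ioc_eq_integral_Ioo]
    have hIoo2 : (∫ s in Ioo 0 t, (T - (t - s) + δ)⁻¹)
        = ∫ s in (0:ℝ)..t, (T - (t - s) + δ)⁻¹ := by
      rw [intervalIntegral.integral_of_le ht0.le, integral_Ioc_eq_integral_Ioo]
    have hc1 : (∫ s in (0:ℝ)..t, (t - s + δ)⁻¹) = Real.log ((t+δ)/δ) := by
      have h : ∀ s : ℝ, t - s + δ = (t + δ) - s := fun s => by ring
      simp only [h]
      rw [intervalIntegral.integral_comp_sub_left (fun x => x⁻¹) (t+δ)]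
      have h1 : t + δ - t = δ := by ring
      have h2 : t + δ - 0 = t + δ := by ring
      rw [h1, h2, integral_inv_of_pos hδ0 (by linarith)]
    have hc2 : (∫ s in (0:ℝ)..t, (T - (t - s) + δ)⁻¹)
        = Real.log ((T + δ)/(T - t + δ)) := by
      have h : ∀ s : ℝ, T - (t - s) + δ = s + (T - t + δ) := fun s => by ring
      simp only [h]
      rw [intervalIntegral.integral_comp_add_right (fun x => x⁻¹) (T - t + δ)]
      rw [zero_add, integral_inv_of_pos (by linarith) (by linarith)]
      congr 1
      ring
    -- bound the logs
    have hlog1 : Real.log ((t+δ)/δ) ≤ L + |Real.log δ| := by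
      rw [Real.log_div (by linarith) (ne_of_gt hδ0)]
      have h1 : Real.log (t + δ) ≤ L := Real.log_le_log (by linarith) (by linarith)
      have h2 : -Real.log δ ≤ |Real.log δ| := neg_le_abs _
      linarith
    have hlog2 : Real.log ((T + δ)/(T - t + δ)) ≤ L + |Real.log δ| := by
      rw [Real.log_div (by linarith) (by linarith)]
      have h1 : Real.log (T + δ) ≤ L := Real.log_le_log (by linarith) (by linarith)
      have h2 : Real.log δ ≤ Real.log (T - t + δ) := Real.log_le_log hδ0 (by linarith)
      have h3 : -Real.log δ ≤ |Real.log δ| := neg_le_abs _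
      linarith
    have : (∫ s in Ioo 0 t, f s) ≤ 2 * L + 2 * |Real.log δ| := by
      rw [hsplit, hIoo1, hIoo2, hc1, hc2] at hmono
      linarith
    calc (∫ s in Ioo 0 t, f s) ≤ 2 * L + 2 * |Real.log δ| := this
      _ = B := by rw [hBdef, hlogδ]; ring
  -- outer bound
  have hnonneg : ∀ t ∈ Ioo (0:ℝ) T,
      0 ≤ ∫ s in Ioo 0 t, (min (t - s) (T - (t - s)) ^ (2 * H) + ε) ^ (-(d : ℝ) / 2) := by
    rintro t ⟨ht0, htT⟩
    apply setIntegral_nonneg measurableSet_Ioo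
    rintro s ⟨hs0, hst⟩
    have hm0 : 0 < min (t - s) (T - (t - s)) := lt_min (by linarith) (by linarith)
    have hbase : 0 < min (t - s) (T - (t - s)) ^ (2 * H) + ε := by
      have := Real.rpow_nonneg hm0.le (2 * H); linarith
    exact Real.rpow_nonneg hbase.le _
  have houter : (∫ t in Ioo 0 T, ∫ s in Ioo 0 t,
      (min (t - s) (T - (t - s)) ^ (2 * H) + ε) ^ (-(d : ℝ) / 2)) ≤ B * T := by
    have hbd : ∀ᵐ (t : ℝ), t ∈ Ioo (0:ℝ) T →
        ‖∫ s in Ioo 0 t, (min (t - s) (T - (t - s)) ^ (2 * H) + ε) ^ (-(d : ℝ) / 2)‖ ≤ B :=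
      Filter.Eventually.of_forall (fun t ht => by
        rw [Real.norm_eq_abs, abs_of_nonneg (hnonneg t ht)]
        exact key t ht)
    have h1 := norm_setIntegral_le_of_norm_le_const_ae' (μ := volume) (s := Ioo 0 T)
      (f := fun t => ∫ s in Ioo 0 t,
        (min (t - s) (T - (t - s)) ^ (2 * H) + ε) ^ (-(d : ℝ) / 2))
      (C := B) measure_Ioo_lt_top hbd
    calc (∫ t in Ioo 0 T, ∫ s in Ioo 0 t,
          (min (t - s) (T - (t - s)) ^ (2 * H) + ε) ^ (-(d : ℝ) / 2))
          ≤ ‖∫ t in Ioo 0 T, ∫ s in Ioo 0 t,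
            (min (t - s) (T - (t - s)) ^ (2 * H) + ε) ^ (-(d : ℝ) / 2)‖ := le_abs_self _
        _ ≤ B * (volume (Ioo (0:ℝ) T)).toReal := h1
        _ = B * T := by rw [Real.volume_Ioo, ENNReal.toReal_ofReal (by linarith)]; ring
  have hA : 0 ≤ |Real.log ε| := abs_nonneg _
  calc (∫ t in Ioo 0 T, ∫ s in Ioo 0 t,
      (min (t - s) (T - (t - s)) ^ (2 * H) + ε) ^ (-(d : ℝ) / 2)) ≤ B * T := houter
    _ ≤ T * (2 * L + d) * (1 + |Real.log ε|) := by rw [hBdef]; nlinarith [mul_nonneg (mul_nonneg hT.le hL0) hA, mul_nonneg hT.le hA]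
end

section
/- Let H ∈ (0,1/2], d≥1 an integer with Hd ≤ 1, and T₁, T₂ > 0. Then lim_{ε↓0} (2π)^{−d/2} ∫₀^{T₁} ∫₀^{T₂} ( (s+t)^{2H} + ε )^{−d/2} ds dt = (2π)^{−d/2} ∫₀^{T₁} ∫₀^{T₂} (s+t)^{−Hd} ds dt, and this limit is finite. In particular, the expected mutual intersection local time E(L_{kl}) of two distinct branches of a fractional Brownian starburst is finite for Hd ≤ 1. -/
open MeasureTheory Real Set Filter Topology


open Real in
lemma measurable_rpow_const' (c : ℝ) : Measurable fun x : ℝ => x ^ c := by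
  have h1 : Measurable fun x : ℝ => Real.exp (Real.log x * c) :=
    (Real.measurable_log.mul_const c).exp
  have heq : (fun x : ℝ => x ^ c) = fun x =>
      if x = 0 then (if c = 0 then 1 else 0)
      else if 0 < x then Real.exp (Real.log x * c)
      else Real.exp (Real.log x * c) * Real.cos (c * π) := by
    funext x
    rcases lt_trichotomy x 0 with h | h | h
    · rw [if_neg h.ne, if_neg (not_lt.2 h.le), Real.rpow_def_of_neg h, mul_comm c π]
    · subst h
      rw [if_pos rfl]
      by_cases hc : c = 0
      · simp [hc]
      · simp [Real.zero_rpow hc, hc]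
    · rw [if_neg h.ne', if_pos h, Real.rpow_def_of_pos h]
  rw [heq]
  exact Measurable.ite (measurableSet_singleton (0:ℝ)) measurable_const
    (Measurable.ite measurableSet_Ioi h1 (h1.mul_const _))

/-- For `H ≤ 1/2` and `Hd ≤ 1`, the regularized expected mutual intersection
local time of two distinct branches of a fractional Brownian starburst
converges as `ε ↓ 0` to the finite value
`(2π)^{−d/2} ∫₀^{T₁}∫₀^{T₂} (s+t)^{−Hd} ds dt`. -/
theorem stmt13 (H : ℝ) (d : ℕ) (T₁ T₂ : ℝ) (hH0 : 0 < H) (hH : H ≤ 1 / 2)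
    (hd : 1 ≤ d) (hHd : H * d ≤ 1) (hT₁ : 0 < T₁) (hT₂ : 0 < T₂) :
    IntegrableOn (fun p : ℝ × ℝ => (p.1 + p.2) ^ (-(H * d)))
      (Ioc 0 T₁ ×ˢ Ioc 0 T₂) ∧
    Tendsto (fun ε : ℝ => (2 * π) ^ (-(d : ℝ) / 2) *
        ∫ p in Ioc 0 T₁ ×ˢ Ioc 0 T₂, ((p.1 + p.2) ^ (2 * H) + ε) ^ (-(d : ℝ) / 2))
      (𝓝[>] 0)
      (𝓝 ((2 * π) ^ (-(d : ℝ) / 2) *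
        ∫ p in Ioc 0 T₁ ×ˢ Ioc 0 T₂, (p.1 + p.2) ^ (-(H * d)))) := by
  have hd0 : (0 : ℝ) < d := by exact_mod_cast hd
  set a : ℝ := H * d with ha
  have ha0 : 0 < a := mul_pos hH0 hd0
  have hmeasS : MeasurableSet (Ioc (0:ℝ) T₁ ×ˢ Ioc (0:ℝ) T₂) :=
    measurableSet_Ioc.prod measurableSet_Ioc
  -- pointwise bound on the set
  have hbound : ∀ p : ℝ × ℝ, p ∈ Ioc (0:ℝ) T₁ ×ˢ Ioc (0:ℝ) T₂ →
      (p.1 + p.2) ^ (-a) ≤ p.1 ^ (-(a / 2)) * p.2 ^ (-(a / 2)) := by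
    rintro ⟨s, t⟩ ⟨hs, ht⟩
    have hs0 : 0 < s := hs.1
    have ht0 : 0 < t := ht.1
    have hst : 0 < s + t := by linarith
    have h1 : s ^ (-(a / 2)) * t ^ (-(a / 2)) = (s * t) ^ (-(a / 2)) :=
      (Real.mul_rpow hs0.le ht0.le).symm
    have h2 : (s + t) ^ (-a) = ((s + t) ^ (2 : ℝ)) ^ (-(a / 2)) := by
      rw [← Real.rpow_mul hst.le]; congr 1; ring
    have h3 : s * t ≤ (s + t) ^ (2 : ℝ) := by
      rw [Real.rpow_two]; nlinarith
    rw [h1, h2]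
    exact Real.rpow_le_rpow_of_nonpos (mul_pos hs0 ht0) h3 (by linarith)
  -- integrability of the dominating function
  have hint1 : IntegrableOn (fun s : ℝ => s ^ (-(a / 2))) (Ioc 0 T₁) := by
    have := intervalIntegral.intervalIntegrable_rpow'
      (a := 0) (b := T₁) (r := -(a / 2)) (by linarith)
    rwa [intervalIntegrable_iff_integrableOn_Ioc_of_le hT₁.le] at this
  have hint2 : IntegrableOn (fun t : ℝ => t ^ (-(a / 2))) (Ioc 0 T₂) := by
    have := intervalIntegral.intervalIntegrable_rpow'
      (a := 0) (b := T₂) (r := -(a / 2)) (by linarith)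
    rwa [intervalIntegrable_iff_integrableOn_Ioc_of_le hT₂.le] at this
  have hg : IntegrableOn (fun p : ℝ × ℝ => p.1 ^ (-(a / 2)) * p.2 ^ (-(a / 2)))
      (Ioc 0 T₁ ×ˢ Ioc 0 T₂) := by
    rw [IntegrableOn, Measure.volume_eq_prod, ← Measure.prod_restrict]
    exact hint1.mul_prod hint2
  -- measurability of the limit function
  have hfm : Measurable (fun p : ℝ × ℝ => (p.1 + p.2) ^ (-a)) :=
    (measurable_rpow_const' (-a)).comp (measurable_fst.add measurable_snd)
  -- integrability of the limit function
  have hf : IntegrableOn (fun p : ℝ × ℝ => (p.1 + p.2) ^ (-a))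
      (Ioc 0 T₁ ×ˢ Ioc 0 T₂) := by
    refine hg.mono' hfm.aestronglyMeasurable ?_
    refine (ae_restrict_iff' hmeasS).2 (ae_of_all _ fun p hp => ?_)
    have h0 : (0:ℝ) ≤ (p.1 + p.2) ^ (-a) :=
      Real.rpow_nonneg (by rcases hp with ⟨h1, h2⟩; linarith [h1.1, h2.1]) _
    rw [Real.norm_of_nonneg h0]
    exact hbound p hp
  refine ⟨hf, ?_⟩
  -- dominated convergence
  have key : Tendsto (fun ε : ℝ =>
      ∫ p in Ioc 0 T₁ ×ˢ Ioc 0 T₂, ((p.1 + p.2) ^ (2 * H) + ε) ^ (-(d : ℝ) / 2))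
      (𝓝[>] 0)
      (𝓝 (∫ p in Ioc 0 T₁ ×ˢ Ioc 0 T₂, (p.1 + p.2) ^ (-a))) := by
    refine tendsto_integral_filter_of_dominated_convergence
      (fun p => p.1 ^ (-(a / 2)) * p.2 ^ (-(a / 2))) ?_ ?_ hg ?_
    · exact Eventually.of_forall fun ε =>
        ((measurable_rpow_const' (-(d:ℝ)/2)).comp
          (((measurable_rpow_const' (2*H)).comp
            (measurable_fst.add measurable_snd)).add
          measurable_const)).aestronglyMeasurable
    · filter_upwards [self_mem_nhdsWithin] with ε (hε : 0 < ε)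
      refine (ae_restrict_iff' hmeasS).2 (ae_of_all _ fun p hp => ?_)
      rcases hp with ⟨h1, h2⟩
      have hst : 0 < p.1 + p.2 := by linarith [h1.1, h2.1]
      have hb : (0:ℝ) < (p.1 + p.2) ^ (2 * H) := Real.rpow_pos_of_pos hst _
      have h0 : (0:ℝ) ≤ ((p.1 + p.2) ^ (2 * H) + ε) ^ (-(d : ℝ) / 2) :=
        Real.rpow_nonneg (by linarith) _
      rw [Real.norm_of_nonneg h0]
      have step1 : ((p.1 + p.2) ^ (2 * H) + ε) ^ (-(d : ℝ) / 2) ≤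
          ((p.1 + p.2) ^ (2 * H)) ^ (-(d : ℝ) / 2) :=
        Real.rpow_le_rpow_of_nonpos hb (by linarith)
          (by rw [neg_div]; exact neg_nonpos.2 (by positivity))
      have step2 : ((p.1 + p.2) ^ (2 * H)) ^ (-(d : ℝ) / 2) = (p.1 + p.2) ^ (-a) := by
        rw [← Real.rpow_mul hst.le]; congr 1; ring
      calc ((p.1 + p.2) ^ (2 * H) + ε) ^ (-(d : ℝ) / 2)
          ≤ (p.1 + p.2) ^ (-a) := by rw [← step2]; exact step1
        _ ≤ _ := hbound p ⟨h1, h2⟩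
    · refine (ae_restrict_iff' hmeasS).2 (ae_of_all _ fun p hp => ?_)
      rcases hp with ⟨h1, h2⟩
      have hst : 0 < p.1 + p.2 := by linarith [h1.1, h2.1]
      have hb : (0:ℝ) < (p.1 + p.2) ^ (2 * H) := Real.rpow_pos_of_pos hst _
      have hcont : ContinuousAt (fun x : ℝ => x ^ (-(d : ℝ) / 2))
          ((p.1 + p.2) ^ (2 * H)) :=
        Real.continuousAt_rpow_const _ _ (Or.inl hb.ne')
      have hadd : Tendsto (fun ε : ℝ => (p.1 + p.2) ^ (2 * H) + ε) (𝓝[>] 0)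
          (𝓝 ((p.1 + p.2) ^ (2 * H))) := by
        have h := ((continuous_const (y := (p.1 + p.2) ^ (2 * H))).add
          continuous_id).tendsto (0 : ℝ)
        simpa [Pi.add_def] using h.mono_left nhdsWithin_le_nhds
      have := hcont.tendsto.comp hadd
      have step2 : ((p.1 + p.2) ^ (2 * H)) ^ (-(d : ℝ) / 2) = (p.1 + p.2) ^ (-a) := by
        rw [← Real.rpow_mul hst.le]; congr 1; ring
      rw [step2] at this
      exact this
  exact key.const_mul _
end
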